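/- Let Q be a commutative nontrivial ZDF involutive quantale, X a set, A a commutative von Neumann unital *-subsemialgebra of Hom(X,X), and f ∈ A. Then the Q-relation f_supp defined by f_supp(x,y) = 1 if x = y and x ∈ supp(f) and f_supp(x,y) = 0 otherwise belongs to A; likewise the Q-relation which is 1 on the diagonal points of the complement of supp(f) and 0 otherwise belongs to A. -/
import Mathlib


open Classical

noncomputable section

universe u v

/-- A commutative involutive quantale: a complete lattice with a commutative
monoid operation distributing over arbitrary joins, together with a
join-preserving involution compatible with multiplication and unit. -/
structure CommInvQuantale (Q : Type u) [CompleteLattice Q] : Type u where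
  mul : Q → Q → Q
  one : Q
  mul_comm : ∀ a b : Q, mul a b = mul b a
  mul_assoc : ∀ a b c : Q, mul (mul a b) c = mul a (mul b c)
  one_mul : ∀ a : Q, mul one a = a
  mul_sSup : ∀ (a : Q) (S : Set Q), mul a (sSup S) = ⨆ y ∈ S, mul a y
  inv : Q → Q
  inv_inv : ∀ a : Q, inv (inv a) = a
  inv_sSup : ∀ S : Set Q, inv (sSup S) = ⨆ y ∈ S, inv y
  inv_mul : ∀ a b : Q, inv (mul a b) = mul (inv a) (inv b)
  inv_one : inv one = one

namespace CommInvQuantale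

variable {Q : Type u} [CompleteLattice Q] {X : Type v}

/-- Zero-divisor free: `x·y = 0` implies `x = 0` or `y = 0` (where `0 = ⊥`). -/
def ZDF (Qd : CommInvQuantale Q) : Prop :=
  ∀ a b : Q, Qd.mul a b = ⊥ → a = ⊥ ∨ b = ⊥

/-- Nontrivial: `1 ≠ 0`. -/
def NontrivialQ (Qd : CommInvQuantale Q) : Prop := Qd.one ≠ (⊥ : Q)

/-- The zero `Q`-relation. -/
def qzero : X → X → Q := fun _ _ => (⊥ : Q)

/-- The support of a `Q`-relation. -/
def supp (f : X → X → Q) : Set X := {x | ∃ y, f x y ≠ (⊥ : Q)}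

/-- The cosupport of a `Q`-relation. -/
def cosupp (f : X → X → Q) : Set X := {x | ∃ y, f y x ≠ (⊥ : Q)}

/-- The kernel of a character of `A`. -/
def kerChar (A : Set (X → X → Q)) (ρ : (X → X → Q) → Q) : Set (X → X → Q) :=
  {f ∈ A | ρ f = (⊥ : Q)}

/-- The map `w : Q → 2` sending `0` to `0` and every nonzero element to `1`
(with `2` modelled by `Bool`). -/
def wmap : Q → Bool := fun q => if q = (⊥ : Q) then false else true

/-- The kernel of a homomorphism `γ : A → 2` (with `2` modelled by `Bool`). -/
def kerTwo (A : Set (X → X → Q)) (γ : (X → X → Q) → Bool) : Set (X → X → Q) :=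
  {f ∈ A | γ f = false}

variable (Qd : CommInvQuantale Q)

/-- Composition of `Q`-relations: `(f ∘ g)(x,z) = ⋁_y g(x,y) · f(y,z)`,
so `qcomp Qd f g` is "`f` after `g`". -/
def qcomp (f g : X → X → Q) : X → X → Q := fun x z => ⨆ y : X, Qd.mul (g x y) (f y z)

/-- The identity `Q`-relation. -/
def qid : X → X → Q := fun x y => if x = y then Qd.one else ⊥

/-- The dagger of a `Q`-relation: `f†(x,y) = f(y,x)*`. -/
def qdag (f : X → X → Q) : X → X → Q := fun x y => Qd.inv (f y x)

/-- Scalar multiplication of a `Q`-relation: `(q•f)(x,y) = q·f(x,y)`. -/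
def qsmul (q : Q) (f : X → X → Q) : X → X → Q := fun x y => Qd.mul q (f x y)

/-- A commutative unital *-subsemialgebra of `Hom(X,X)`: contains the zero and
identity relations, closed under pointwise binary join, composition, scalar
multiplication and dagger, and composition is commutative on it. -/
structure IsSubalg (A : Set (X → X → Q)) : Prop where
  zero_mem : qzero ∈ A
  id_mem : Qd.qid ∈ A
  sup_mem : ∀ f ∈ A, ∀ g ∈ A, f ⊔ g ∈ A
  comp_mem : ∀ f ∈ A, ∀ g ∈ A, Qd.qcomp f g ∈ A
  smul_mem : ∀ (q : Q), ∀ f ∈ A, Qd.qsmul q f ∈ A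
  dag_mem : ∀ f ∈ A, Qd.qdag f ∈ A
  comp_comm : ∀ f ∈ A, ∀ g ∈ A, Qd.qcomp f g = Qd.qcomp g f

/-- The commutant of a set of `Q`-relations. -/
def commutant (B : Set (X → X → Q)) : Set (X → X → Q) :=
  { f | ∀ g ∈ B, Qd.qcomp f g = Qd.qcomp g f }

/-- A commutative von Neumann unital *-subsemialgebra: a commutative unital
*-subsemialgebra equal to its double commutant. -/
def IsVN (A : Set (X → X → Q)) : Prop :=
  Qd.IsSubalg A ∧ Qd.commutant (Qd.commutant A) = A

/-- A character of `A`: a map `ρ : Hom(X,X) → Q` with `ρ(0) = 0`, `ρ(id) = 1`,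
preserving binary joins, composition and dagger on `A`. -/
structure IsChar (A : Set (X → X → Q)) (ρ : (X → X → Q) → Q) : Prop where
  map_zero : ρ qzero = (⊥ : Q)
  map_id : ρ Qd.qid = Qd.one
  map_sup : ∀ f ∈ A, ∀ g ∈ A, ρ (f ⊔ g) = ρ f ⊔ ρ g
  map_comp : ∀ f ∈ A, ∀ g ∈ A, ρ (Qd.qcomp f g) = Qd.mul (ρ f) (ρ g)
  map_dag : ∀ f ∈ A, ρ (Qd.qdag f) = Qd.inv (ρ f)

/-- An ideal of `A`. -/
structure IsIdeal (A J : Set (X → X → Q)) : Prop where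
  subset : J ⊆ A
  zero_mem : qzero ∈ J
  sup_mem : ∀ a ∈ J, ∀ b ∈ J, a ⊔ b ∈ J
  absorb : ∀ f ∈ A, ∀ a ∈ J, Qd.qcomp f a ∈ J

/-- A prime k*-ideal of `A`: a proper prime ideal which is a k-ideal closed
under dagger. -/
structure IsPrimeKStarIdeal (A J : Set (X → X → Q)) : Prop where
  ideal : Qd.IsIdeal A J
  proper : J ≠ A
  prime : ∀ f ∈ A, ∀ g ∈ A, Qd.qcomp f g ∈ J → f ∈ J ∨ g ∈ J
  kideal : ∀ a ∈ J, ∀ b ∈ A, a ⊔ b ∈ J → b ∈ J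
  dag_mem : ∀ a ∈ J, Qd.qdag a ∈ J

/-- A global section of the Gelfand spectrum over `X`: an assignment of a
character to every commutative von Neumann unital *-subsemialgebra of
`Hom(X,X)`, compatible with restriction along inclusions. -/
def IsGelfandGlobalSection (ρ : Set (X → X → Q) → (X → X → Q) → Q) : Prop :=
  (∀ A : Set (X → X → Q), Qd.IsVN A → Qd.IsChar A (ρ A)) ∧
  (∀ A B : Set (X → X → Q), Qd.IsVN A → Qd.IsVN B → A ⊆ B → ∀ f ∈ A, ρ A f = ρ B f)

/-- A global section of the prime spectrum over `X`: an assignment of a prime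
k*-ideal to every commutative von Neumann unital *-subsemialgebra of
`Hom(X,X)`, compatible with restriction along inclusions. -/
def IsPrimeGlobalSection (χ : Set (X → X → Q) → Set (X → X → Q)) : Prop :=
  (∀ A : Set (X → X → Q), Qd.IsVN A → Qd.IsPrimeKStarIdeal A (χ A)) ∧
  (∀ A B : Set (X → X → Q), Qd.IsVN A → Qd.IsVN B → A ⊆ B → χ A = A ∩ χ B)

/-- An idempotent element of `A`. -/
def IsIdem (A : Set (X → X → Q)) (p : X → X → Q) : Prop :=
  p ∈ A ∧ Qd.qcomp p p = p

/-- A subunital idempotent of `A`: an idempotent with an orthogonal idempotent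
complement summing to the identity. -/
def IsSubunital (A : Set (X → X → Q)) (p : X → X → Q) : Prop :=
  Qd.IsIdem A p ∧ ∃ q, Qd.IsIdem A q ∧ Qd.qcomp p q = qzero ∧ p ⊔ q = Qd.qid

/-- A primitive subunital idempotent of `A`. -/
def IsPrimitive (A : Set (X → X → Q)) (p : X → X → Q) : Prop :=
  Qd.IsSubunital A p ∧ p ≠ qzero ∧
    ¬ ∃ s t, Qd.IsSubunital A s ∧ s ≠ qzero ∧ Qd.IsSubunital A t ∧ t ≠ qzero ∧
      Qd.qcomp s t = qzero ∧ s ⊔ t = p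

/-- The unique quantale map `! : 2 → Q` (with `2` modelled by `Bool`). -/
def bang : Bool → Q := fun b => if b then Qd.one else ⊥

/-- A homomorphism `γ : A → 2` (with `2` the two-element quantale, modelled by
`Bool` with join `||` and multiplication `&&`, trivial involution). -/
structure IsTwoHom (A : Set (X → X → Q)) (γ : (X → X → Q) → Bool) : Prop where
  map_zero : γ qzero = false
  map_id : γ Qd.qid = true
  map_sup : ∀ f ∈ A, ∀ g ∈ A, γ (f ⊔ g) = (γ f || γ g)
  map_comp : ∀ f ∈ A, ∀ g ∈ A, γ (Qd.qcomp f g) = (γ f && γ g)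
  map_dag : ∀ f ∈ A, γ (Qd.qdag f) = γ f

/-- The Gelfand spectrum of `A`: the set of characters of `A`. -/
def SpecG (A : Set (X → X → Q)) : Type (max u v) :=
  {ρ : (X → X → Q) → Q // Qd.IsChar A ρ}

/-- The prime spectrum of `A`: the set of prime k*-ideals of `A`. -/
def SpecP (A : Set (X → X → Q)) : Type (max u v) :=
  {J : Set (X → X → Q) // Qd.IsPrimeKStarIdeal A J}

/-- The Zariski topology on the Gelfand spectrum, with basic closed sets
`V_G(J) = {ρ | J ⊆ ker ρ}` for ideals `J` of `A`. -/
def zariskiG (A : Set (X → X → Q)) : TopologicalSpace (Qd.SpecG A) :=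
  TopologicalSpace.generateFrom
    {U | ∃ J : Set (X → X → Q), Qd.IsIdeal A J ∧
      U = {ρ : Qd.SpecG A | J ⊆ kerChar A ρ.1}ᶜ}

/-- The Zariski topology on the prime spectrum, with basic closed sets
`V_P(J) = {K | J ⊆ K}` for ideals `J` of `A`. -/
def zariskiP (A : Set (X → X → Q)) : TopologicalSpace (Qd.SpecP A) :=
  TopologicalSpace.generateFrom
    {U | ∃ J : Set (X → X → Q), Qd.IsIdeal A J ∧
      U = {K : Qd.SpecP A | J ⊆ K.1}ᶜ}

section Aux

variable (Qd : CommInvQuantale Q)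

lemma mul_bot' (a : Q) : Qd.mul a ⊥ = ⊥ := by
  have h := Qd.mul_sSup a ∅
  simpa using h

lemma bot_mul' (a : Q) : Qd.mul ⊥ a = ⊥ := by
  rw [Qd.mul_comm]; exact Qd.mul_bot' a

lemma inv_bot' : Qd.inv ⊥ = ⊥ := by
  have h := Qd.inv_sSup ∅
  simpa using h

lemma inv_ne_bot' {a : Q} (ha : a ≠ ⊥) : Qd.inv a ≠ ⊥ := by
  intro hb
  apply ha
  have := congrArg Qd.inv hb
  rwa [Qd.inv_inv, Qd.inv_bot'] at this

lemma inv_iSup {ι : Sort*} (h : ι → Q) : Qd.inv (⨆ i, h i) = ⨆ i, Qd.inv (h i) := by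
  rw [show (⨆ i, h i) = sSup (Set.range h) from rfl, Qd.inv_sSup, iSup_range]

lemma exists_ne_bot_of_iSup_ne_bot {ι : Sort*} (h : ι → Q) (hh : (⨆ i, h i) ≠ ⊥) :
    ∃ i, h i ≠ ⊥ := by
  by_contra hc
  push_neg at hc
  exact hh (by simp [hc])

lemma qdag_qdag {X : Type v} (g : X → X → Q) : Qd.qdag (Qd.qdag g) = g := by
  funext x y
  simp [qdag, Qd.inv_inv]

lemma qdag_qcomp {X : Type v} (a b : X → X → Q) :
    Qd.qdag (Qd.qcomp a b) = Qd.qcomp (Qd.qdag b) (Qd.qdag a) := by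
  funext x y
  show Qd.inv (⨆ t, Qd.mul (b y t) (a t x)) = ⨆ t, Qd.mul (Qd.qdag a x t) (Qd.qdag b t y)
  rw [Qd.inv_iSup]
  refine iSup_congr fun t => ?_
  rw [Qd.inv_mul, Qd.mul_comm]
  rfl

lemma commutant_dag {X : Type v} {A : Set (X → X → Q)} (hA : Qd.IsSubalg A)
    {g : X → X → Q} (hg : g ∈ Qd.commutant A) : Qd.qdag g ∈ Qd.commutant A := by
  intro h hh
  have h1 : Qd.qcomp g (Qd.qdag h) = Qd.qcomp (Qd.qdag h) g := hg _ (hA.dag_mem h hh)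
  have h2 := congrArg Qd.qdag h1
  rw [Qd.qdag_qcomp, Qd.qdag_qcomp, Qd.qdag_qdag] at h2
  exact h2.symm

lemma supp_forward {X : Type v} (hZDF : Qd.ZDF) {A : Set (X → X → Q)}
    {g : X → X → Q} (hg : g ∈ Qd.commutant A) {f : X → X → Q} (hf : f ∈ A)
    {x z : X} (hgxz : g x z ≠ ⊥) (hz : z ∈ supp f) : x ∈ supp f := by
  obtain ⟨w, hw⟩ := hz
  have hterm : Qd.mul (g x z) (f z w) ≠ ⊥ := fun h => (hZDF _ _ h).elim hgxz hw
  have hsup : Qd.qcomp f g x w ≠ ⊥ := by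
    intro h
    apply hterm
    have hle : Qd.mul (g x z) (f z w) ≤ Qd.qcomp f g x w :=
      le_iSup (fun y => Qd.mul (g x y) (f y w)) z
    exact le_bot_iff.mp (h ▸ hle)
  have hcomm : Qd.qcomp g f = Qd.qcomp f g := hg f hf
  have hsup2 : (⨆ y, Qd.mul (f x y) (g y w)) ≠ ⊥ := by
    show Qd.qcomp g f x w ≠ ⊥
    rw [hcomm]; exact hsup
  obtain ⟨y, hy⟩ := exists_ne_bot_of_iSup_ne_bot _ hsup2
  exact ⟨y, fun h => hy (by rw [h, Qd.bot_mul'])⟩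

lemma supp_iff {X : Type v} (hZDF : Qd.ZDF) {A : Set (X → X → Q)} (hA : Qd.IsSubalg A)
    {g : X → X → Q} (hg : g ∈ Qd.commutant A) {f : X → X → Q} (hf : f ∈ A)
    {x z : X} (hgxz : g x z ≠ ⊥) : x ∈ supp f ↔ z ∈ supp f := by
  constructor
  · intro hx
    have hdag : Qd.qdag g z x ≠ ⊥ := Qd.inv_ne_bot' hgxz
    exact Qd.supp_forward hZDF (Qd.commutant_dag hA hg) hf hdag hx
  · exact Qd.supp_forward hZDF hg hf hgxz

lemma diag_mem {X : Type v} {A : Set (X → X → Q)} (hA : Qd.IsVN A) (P : X → Prop)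
    (hP : ∀ g ∈ Qd.commutant A, ∀ x z : X, g x z ≠ ⊥ → (P x ↔ P z)) :
    (fun x y : X => if x = y ∧ P x then Qd.one else (⊥ : Q)) ∈ A := by
  rw [← hA.2]
  intro g hg
  funext x z
  show (⨆ y, Qd.mul (g x y) (if y = z ∧ P y then Qd.one else ⊥))
      = ⨆ y, Qd.mul (if x = y ∧ P x then Qd.one else ⊥) (g y z)
  have hL : (⨆ y, Qd.mul (g x y) (if y = z ∧ P y then Qd.one else ⊥))
      = if P z then g x z else ⊥ := by
    apply le_antisymm
    · apply iSup_le
      intro y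
      by_cases hy : y = z ∧ P y
      · obtain ⟨rfl, hyS⟩ := hy
        rw [if_pos ⟨rfl, hyS⟩, if_pos hyS, Qd.mul_comm, Qd.one_mul]
      · rw [if_neg hy, Qd.mul_bot']
        exact bot_le
    · by_cases hz : P z
      · rw [if_pos hz]
        have h1 : Qd.mul (g x z) (if z = z ∧ P z then Qd.one else ⊥) = g x z := by
          rw [if_pos ⟨rfl, hz⟩, Qd.mul_comm, Qd.one_mul]
        rw [← h1]
        exact le_iSup (fun y => Qd.mul (g x y) (if y = z ∧ P y then Qd.one else ⊥)) z
      · rw [if_neg hz]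
        exact bot_le
  have hR : (⨆ y, Qd.mul (if x = y ∧ P x then Qd.one else ⊥) (g y z))
      = if P x then g x z else ⊥ := by
    apply le_antisymm
    · apply iSup_le
      intro y
      by_cases hy : x = y ∧ P x
      · obtain ⟨rfl, hyS⟩ := hy
        rw [if_pos ⟨rfl, hyS⟩, if_pos hyS, Qd.one_mul]
      · rw [if_neg hy, Qd.bot_mul']
        exact bot_le
    · by_cases hx : P x
      · rw [if_pos hx]
        have h1 : Qd.mul (if x = x ∧ P x then Qd.one else ⊥) (g x z) = g x z := by
          rw [if_pos ⟨rfl, hx⟩, Qd.one_mul]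
        rw [← h1]
        exact le_iSup (fun y => Qd.mul (if x = y ∧ P x then Qd.one else ⊥) (g y z)) x
      · rw [if_neg hx]
        exact bot_le
  rw [hL, hR]
  by_cases hg0 : g x z = ⊥
  · rw [hg0]
    simp
  · rw [hP g hg x z hg0]

end Aux

/-- For `f ∈ A`, the relation which is the identity on `supp(f)`
and zero otherwise belongs to `A`, and likewise for the complement of
`supp(f)`. -/
theorem support_idempotent_mem
    (Qd : CommInvQuantale Q) (hZDF : Qd.ZDF) (hNT : Qd.NontrivialQ)
    (X : Type v) (A : Set (X → X → Q)) (hA : Qd.IsVN A)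
    (f : X → X → Q) (hf : f ∈ A) :
    (fun x y : X => if x = y ∧ x ∈ supp f then Qd.one else (⊥ : Q)) ∈ A ∧
    (fun x y : X => if x = y ∧ x ∉ supp f then Qd.one else (⊥ : Q)) ∈ A := by
  constructor
  · exact Qd.diag_mem hA (fun x => x ∈ supp f)
      (fun g hg x z h0 => Qd.supp_iff hZDF hA.1 hg hf h0)
  · have h := Qd.diag_mem hA (fun x => x ∉ supp f)
      (fun g hg x z h0 => not_congr (Qd.supp_iff hZDF hA.1 hg hf h0))
    convert h using 2 with x
    funext y
    congr 1

end CommInvQuantale
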